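/- arXiv:1309.3713 — 2 statements merged into one kernel-verified Lean document; each statement's English description precedes it below -/
import Mathlib

section
/- Assume the axioms BA and AxPh. Then for all inertial observers k and h, the speed v_k(h) is finite and v_k(h) < 1 (there are no faster-than-light inertial observers). -/
open scoped Classical

noncomputable section

/-! Framework for axiomatic relativistic/Newtonian dynamics
(Madarász–Stannett–Székely).  `Q⁴` is modelled as `Fin 4 → Q` with the
time component at index `0` and space components at indices `1,2,3`;
`Q³` is `Fin 3 → Q`. -/

/-- `AxEField`: every nonnegative element of `Q` has a square root
(`Q` being a linearly ordered field). -/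
def AxEField (Q : Type*) [Field Q] [LinearOrder Q] [IsStrictOrderedRing Q] : Prop :=
  ∀ x : Q, 0 ≤ x → ∃ y : Q, y ^ 2 = x

/-- The nonnegative square root of `x`, when it exists (junk value `0` otherwise).
In a Euclidean field this is the usual square root function `√`. -/
def esqrt {Q : Type*} [Field Q] [LinearOrder Q] [IsStrictOrderedRing Q] (x : Q) : Q :=
  if h : ∃ y : Q, 0 ≤ y ∧ y ^ 2 = x then h.choose else 0

/-- Squared Euclidean norm on `Q³`. -/
def normSq3 {Q : Type*} [Field Q] [LinearOrder Q] [IsStrictOrderedRing Q] (u : Fin 3 → Q) : Q :=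
  u 0 ^ 2 + u 1 ^ 2 + u 2 ^ 2

/-- Euclidean norm (length) on `Q³`. -/
def enorm3 {Q : Type*} [Field Q] [LinearOrder Q] [IsStrictOrderedRing Q] (u : Fin 3 → Q) : Q :=
  esqrt (normSq3 u)

/-- The Minkowski norm `‖x‖_M = √|x₁² − x₂² − x₃² − x₄²|` on `Q⁴`. -/
def minkNorm {Q : Type*} [Field Q] [LinearOrder Q] [IsStrictOrderedRing Q] (x : Fin 4 → Q) : Q :=
  esqrt |x 0 ^ 2 - x 1 ^ 2 - x 2 ^ 2 - x 3 ^ 2|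

/-- The straight line of `Q⁴` through two (distinct) points. -/
def lineThrough {Q : Type*} [Field Q] [LinearOrder Q] [IsStrictOrderedRing Q] (x y : Fin 4 → Q) :
    Set (Fin 4 → Q) :=
  {z | ∃ q : Q, z = x + q • (y - x)}

/-- `f : Q⁴ → Q⁴` is an affine transformation. -/
def IsAffine {Q : Type*} [Field Q] [LinearOrder Q] [IsStrictOrderedRing Q]
    (f : (Fin 4 → Q) → (Fin 4 → Q)) : Prop :=
  ∃ L : (Fin 4 → Q) →ₗ[Q] (Fin 4 → Q), ∀ x, f x = L x + f 0

/-- `u ⪯ w` : `u` and `w` point in the same direction and `u` is no longer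
than `w`. -/
def vecLe {Q : Type*} [Field Q] [LinearOrder Q] [IsStrictOrderedRing Q] (u w : Fin 3 → Q) : Prop :=
  ∃ l : Q, 0 ≤ l ∧ l ≤ 1 ∧ u = l • w

/-- A kinematic/dynamic frame: bodies `B` with distinguished inertial
observers, inertial particles and photons; world-lines, world-view
transformations and relativistic masses. -/
structure Frame (Q : Type*) (B : Type*) where
  /-- inertial observers -/
  IOb : Set B
  /-- inertial particles -/
  Ip : Set B
  /-- photons -/
  Ph : Set B
  /-- `wl k b` : the world-line of body `b` according to observer `k` -/
  wl : B → B → Set (Fin 4 → Q)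
  /-- `w k h` : the world-view transformation from `k`'s world-view to `h`'s -/
  w : B → B → (Fin 4 → Q) → (Fin 4 → Q)
  /-- `m k b` : the relativistic mass of `b` according to `k` -/
  m : B → B → Q

namespace Frame

variable {Q : Type*} [Field Q] [LinearOrder Q] [IsStrictOrderedRing Q] {B : Type*} (F : Frame Q B)

/-- `v_k(b) < ∞` : the world-line of `b` according to `k` contains no two
distinct points with equal time components. -/
def finite (k b : B) : Prop :=
  ∀ x ∈ F.wl k b, ∀ y ∈ F.wl k b, x ≠ y → x 0 ≠ y 0

/-- The velocity `v⃗_k(b) ∈ Q³` computed from any two points of the world-line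
with distinct time components (junk value `0` if there are none). -/
def vvec (k b : B) : Fin 3 → Q :=
  if h : ∃ x, x ∈ F.wl k b ∧ ∃ y, y ∈ F.wl k b ∧ x 0 ≠ y 0 then
    fun i => (h.choose i.succ - h.choose_spec.2.choose i.succ) /
      (h.choose 0 - h.choose_spec.2.choose 0)
  else 0

/-- The speed `v_k(b) ∈ Q`. -/
def speed (k b : B) : Q := enorm3 (F.vvec k b)

/-- The linear momentum `p⃗_k(b) = m_k(b) · v⃗_k(b) ∈ Q³`. -/
def mom (k b : B) : Fin 3 → Q := F.m k b • F.vvec k b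

/-- The four-momentum `P_k(b) = (m_k(b), p⃗_k(b)) ∈ Q⁴`. -/
def fourMom (k b : B) : Fin 4 → Q := Fin.cons (F.m k b) (F.mom k b)

/-- `b` is incoming at `x` according to `k`. -/
def incomingAt (k b : B) (x : Fin 4 → Q) : Prop :=
  x ∈ F.wl k b ∧ F.finite k b ∧ ∀ y ∈ F.wl k b, y ≠ x → y 0 < x 0

/-- `b` is outgoing at `x` according to `k`. -/
def outgoingAt (k b : B) (x : Fin 4 → Q) : Prop :=
  x ∈ F.wl k b ∧ F.finite k b ∧ ∀ y ∈ F.wl k b, y ≠ x → x 0 < y 0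

/-- `in_k(b)` : `b` is incoming at some point according to `k`. -/
def incoming (k b : B) : Prop := ∃ x, F.incomingAt k b x

/-- `out_k(b)` : `b` is outgoing at some point according to `k`. -/
def outgoing (k b : B) : Prop := ∃ x, F.outgoingAt k b x

/-- `coll_k(abc)` : the particles `a`, `b`, `c` form a collision according
to `k` : at some point `x` each of them is incoming or outgoing, and the sum
of the four-momenta of the incoming particles equals that of the outgoing
ones. -/
def coll3 (k a b c : B) : Prop :=
  ∃ x : Fin 4 → Q,
    (F.incomingAt k a x ∨ F.outgoingAt k a x) ∧
    (F.incomingAt k b x ∨ F.outgoingAt k b x) ∧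
    (F.incomingAt k c x ∨ F.outgoingAt k c x) ∧
    ((if F.incomingAt k a x then F.fourMom k a else 0) +
     (if F.incomingAt k b x then F.fourMom k b else 0) +
     (if F.incomingAt k c x then F.fourMom k c else 0) =
     (if F.outgoingAt k a x then F.fourMom k a else 0) +
     (if F.outgoingAt k b x then F.fourMom k b else 0) +
     (if F.outgoingAt k c x then F.fourMom k c else 0))

/-- `a` and `b` collide inelastically according to `k`. -/
def inelastic (k a b : B) : Prop :=
  ∃ c, c ∈ F.Ip ∧ F.coll3 k a b c ∧
    F.incoming k a ∧ F.incoming k b ∧ F.outgoing k c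

/-- `A_k(b)` : the four-momentum of `b` signed according to whether `b` is
incoming (`+P_k(b)`) or outgoing (`−P_k(b)`) for `k`. -/
def signedMom (k b : B) : Fin 4 → Q :=
  if F.incoming k b then F.fourMom k b else -(F.fourMom k b)

/-- `AxL` : world-lines of inertial particles and inertial observers are
subsets of straight lines and contain at least two points. -/
def AxL : Prop :=
  ∀ k ∈ F.IOb, ∀ b ∈ F.Ip ∪ F.IOb,
    (∃ x y : Fin 4 → Q, x ≠ y ∧ F.wl k b ⊆ lineThrough x y) ∧
    (∃ x ∈ F.wl k b, ∃ y ∈ F.wl k b, x ≠ y)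

/-- `AxW` : world-view transformations are bijective affine transformations
mapping world-lines to world-lines. -/
def AxW : Prop :=
  ∀ k ∈ F.IOb, ∀ h ∈ F.IOb,
    Function.Bijective (F.w k h) ∧ IsAffine (F.w k h) ∧
    ∀ b : B, F.w k h '' F.wl k b = F.wl h b

/-- `AxSelf⁻` : inertial observers are stationary in their own coordinate
systems. -/
def AxSelf : Prop :=
  ∀ k ∈ F.IOb, ∀ x ∈ F.wl k k, x 1 = 0 ∧ x 2 = 0 ∧ x 3 = 0

/-- The basic axiom system `BA`. -/
def BA : Prop := AxEField Q ∧ F.AxL ∧ F.AxW ∧ F.AxSelf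

/-- `AxColl₃`. -/
def AxColl3 : Prop :=
  ∀ k ∈ F.IOb, ∀ h ∈ F.IOb, ∀ a ∈ F.Ip, ∀ b ∈ F.Ip, ∀ c ∈ F.Ip,
    F.coll3 k a b c → F.finite h a → F.finite h b → F.finite h c →
      F.coll3 h a b c

/-- `Ax∀inecoll⁻`. -/
def AxInecoll : Prop :=
  ∀ k ∈ F.IOb, ∀ a ∈ F.Ip, ∀ b ∈ F.Ip,
    F.finite k a → F.finite k b → F.m k a + F.m k b ≠ 0 →
      ∃ a' ∈ F.Ip, ∃ b' ∈ F.Ip,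
        F.fourMom k a' = F.fourMom k a ∧ F.fourMom k b' = F.fourMom k b ∧
        F.inelastic k a' b'

/-- `AxSpd⁻`. -/
def AxSpd : Prop :=
  ∀ k ∈ F.IOb, ∀ h ∈ F.IOb, ∀ b ∈ F.Ip,
    vecLe (F.vvec k b) (F.vvec k h) → F.speed k b = F.speed h b →
      F.m k b = F.m h b

/-- `AxMass`. -/
def AxMass : Prop :=
  ∀ k ∈ F.IOb, ∀ h ∈ F.IOb, ∀ a ∈ F.Ip, ∀ b ∈ F.Ip,
    F.fourMom k a = F.fourMom k b → F.m h a = F.m h b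

/-- `AxThEx⁻`. -/
def AxThEx : Prop :=
  ∀ k ∈ F.IOb, ∀ h ∈ F.IOb, ∀ u : Fin 3 → Q,
    vecLe u (F.vvec k h) →
      ∃ b ∈ F.Ip, F.vvec k b = u ∧ F.m k b ≠ 0

/-- The axiom system `DYN` for dynamics. -/
def DYN : Prop :=
  F.BA ∧ F.AxColl3 ∧ F.AxInecoll ∧ F.AxSpd ∧ F.AxMass ∧ F.AxThEx

/-- `AxPh` : the light axiom. -/
def AxPh : Prop :=
  ∀ k ∈ F.IOb, ∀ x y : Fin 4 → Q,
    (∃ p ∈ F.Ph, x ∈ F.wl k p ∧ y ∈ F.wl k p) ↔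
      (x 1 - y 1) ^ 2 + (x 2 - y 2) ^ 2 + (x 3 - y 3) ^ 2 = (x 0 - y 0) ^ 2

/-- `AxAbsSim` : absolute simultaneity. -/
def AxAbsSim : Prop :=
  ∀ k ∈ F.IOb, ∀ h ∈ F.IOb, ∀ x y : Fin 4 → Q,
    (F.w k h x) 0 = (F.w k h y) 0 ↔ x 0 = y 0

end Frame

/-! An affine world-view transformation `w_{hk}` maps photon lines to photon lines, so its linear
part `L` maps light-like vectors to light-like vectors.  Polarising along the light-like vectors
`e₀ ± e₁`, `e₀ ± e₂`, `e₀ ± (e₁ + e₂)/√2` shows that if the time unit `L e₀` were not time-like,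
then `L e₁` and `L e₂` would be Minkowski-orthogonal causal vectors, hence parallel, contradicting
injectivity of `L`.  By `AxSelf⁻` the world-line of `h` is the image of a segment of the time axis,
so it has time-like direction in `k`'s coordinates: its speed is finite and less than `1`. -/

section EuclideanField

variable {Q : Type*} [Field Q] [LinearOrder Q] [IsStrictOrderedRing Q]

theorem esqrt_nonneg (x : Q) : 0 ≤ esqrt x := by
  unfold esqrt
  split_ifs with hx
  · exact hx.choose_spec.1
  · exact le_rfl

theorem sq_esqrt (hE : AxEField Q) {x : Q} (hx : 0 ≤ x) : esqrt x ^ 2 = x := by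
  obtain ⟨y, rfl⟩ := hE x hx
  have hy : ∃ z : Q, 0 ≤ z ∧ z ^ 2 = y ^ 2 := ⟨|y|, abs_nonneg y, sq_abs y⟩
  rw [esqrt, dif_pos hy]
  exact hy.choose_spec.2

theorem esqrt_lt_one (hE : AxEField Q) {x : Q} (h0 : 0 ≤ x) (h1 : x < 1) : esqrt x < 1 := by
  rwa [← pow_lt_one_iff_of_nonneg (esqrt_nonneg x) two_ne_zero, sq_esqrt hE h0]

end EuclideanField

section MinkowskiSquare

variable {R : Type*} [CommRing R]

def minkSq (v : Fin 4 → R) : R := v 0 ^ 2 - (v 1 ^ 2 + v 2 ^ 2 + v 3 ^ 2)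

theorem minkSq_smul (c : R) (v : Fin 4 → R) : minkSq (c • v) = c ^ 2 * minkSq v := by
  simp only [minkSq, Pi.smul_apply, smul_eq_mul]
  ring

theorem minkSq_add_add_minkSq_sub (u v : Fin 4 → R) :
    minkSq (u + v) + minkSq (u - v) = 2 * (minkSq u + minkSq v) := by
  simp only [minkSq, Pi.add_apply, Pi.sub_apply]
  ring

theorem minkSq_single_zero_add {v : Fin 4 → R} (hv0 : v 0 = 0) (hv : minkSq v = -1) :
    minkSq (Pi.single 0 1 + v) = 0 := by
  simp [minkSq, hv0] at hv ⊢
  linear_combination hv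

end MinkowskiSquare

section Minkowski

variable {Q : Type*} [Field Q] [LinearOrder Q] [IsStrictOrderedRing Q]

theorem apply_zero_ne_zero_of_minkSq_pos {v : Fin 4 → Q} (hv : 0 < minkSq v) : v 0 ≠ 0 := by
  intro h0
  simp only [minkSq, h0] at hv
  nlinarith [sq_nonneg (v 1), sq_nonneg (v 2), sq_nonneg (v 3)]

theorem eq_zero_of_minkSq_nonneg {v : Fin 4 → Q} (h0 : v 0 = 0) (hv : 0 ≤ minkSq v) : v = 0 := by
  simp only [minkSq, h0] at hv
  have h1 : v 1 = 0 := by nlinarith [sq_nonneg (v 1), sq_nonneg (v 2), sq_nonneg (v 3)]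
  have h2 : v 2 = 0 := by nlinarith [sq_nonneg (v 1), sq_nonneg (v 2), sq_nonneg (v 3)]
  have h3 : v 3 = 0 := by nlinarith [sq_nonneg (v 1), sq_nonneg (v 2), sq_nonneg (v 3)]
  ext i
  fin_cases i <;> assumption

/-- `hqr` says that `q` and `r` are Minkowski-orthogonal: equality case of the reverse
Cauchy–Schwarz inequality. -/
theorem smul_eq_smul_of_minkSq_add {q r : Fin 4 → Q} (hq : 0 ≤ minkSq q) (hr : 0 ≤ minkSq r)
    (hqr : minkSq (q + r) = minkSq q + minkSq r) : r 0 • q = q 0 • r := by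
  rw [← sub_eq_zero]
  refine eq_zero_of_minkSq_nonneg (by simp [mul_comm]) ?_
  have key : minkSq (r 0 • q - q 0 • r) = r 0 ^ 2 * minkSq q + q 0 ^ 2 * minkSq r := by
    simp only [minkSq, Pi.add_apply, Pi.sub_apply, Pi.smul_apply, smul_eq_mul] at hqr ⊢
    linear_combination (- r 0 * q 0) * hqr
  rw [key]
  positivity

theorem minkSq_pos_apply_single_zero (hE : AxEField Q) {L : (Fin 4 → Q) →ₗ[Q] (Fin 4 → Q)}
    (hinj : Function.Injective L) (hnull : ∀ v, minkSq v = 0 → minkSq (L v) = 0) :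
    0 < minkSq (L (Pi.single 0 1)) := by
  have hsum : ∀ v : Fin 4 → Q, v 0 = 0 → minkSq v = -1 →
      minkSq (L (Pi.single 0 1)) + minkSq (L v) = 0 := by
    intro v hv0 hv
    have hplus := hnull _ (minkSq_single_zero_add hv0 hv)
    have hminus := hnull _ (minkSq_single_zero_add (v := -v) (by simp [hv0])
      (by rw [← neg_one_smul Q v, minkSq_smul, hv]; ring))
    rw [map_add] at hplus
    rw [← sub_eq_add_neg, map_sub] at hminus
    linear_combination (hplus + hminus - minkSq_add_add_minkSq_sub (L (Pi.single 0 1)) (L v)) / 2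
  set q := L (Pi.single 1 1)
  set r := L (Pi.single 2 1)
  have hq := hsum (Pi.single 1 1) (by simp) (by simp [minkSq])
  have hr := hsum (Pi.single 2 1) (by simp) (by simp [minkSq])
  obtain ⟨σ, hσ⟩ := hE (1 / 2) (by norm_num)
  have hqr := hsum (σ • (Pi.single 1 1 + Pi.single 2 1)) (by simp) (by
    rw [minkSq_smul, hσ]
    simp [minkSq]
    norm_num)
  rw [map_smul, minkSq_smul, hσ, map_add] at hqr
  by_contra! hp
  have hpar := smul_eq_smul_of_minkSq_add (q := q) (r := r) (by linarith) (by linarith)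
    (by linarith)
  have hpar' : r 0 • Pi.single 1 1 = (q 0 • Pi.single 2 1 : Fin 4 → Q) :=
    hinj (by simpa only [map_smul] using hpar)
  have hq0 : q 0 = 0 := by simpa using (congrFun hpar' 2).symm
  have hq_zero : q = 0 := eq_zero_of_minkSq_nonneg hq0 (by linarith)
  exact Pi.single_ne_zero_iff.mpr one_ne_zero (hinj (hq_zero.trans (map_zero L).symm))

end Minkowski

section Lines

variable {Q : Type*} [Field Q] [LinearOrder Q] [IsStrictOrderedRing Q]

theorem exists_sub_eq_smul_of_mem_lineThrough {a b z z' : Fin 4 → Q} (hz : z ∈ lineThrough a b)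
    (hz' : z' ∈ lineThrough a b) : ∃ t : Q, z - z' = t • (b - a) := by
  obtain ⟨α, rfl⟩ := hz
  obtain ⟨β, rfl⟩ := hz'
  exact ⟨α - β, by rw [sub_smul]; abel⟩

theorem minkSq_sub_pos_of_subset_lineThrough {S : Set (Fin 4 → Q)} {a b X Y x y : Fin 4 → Q}
    (hS : S ⊆ lineThrough a b) (hX : X ∈ S) (hY : Y ∈ S) (hXY : 0 < minkSq (X - Y))
    (hx : x ∈ S) (hy : y ∈ S) (hxy : x ≠ y) : 0 < minkSq (x - y) := by
  obtain ⟨s, hs⟩ := exists_sub_eq_smul_of_mem_lineThrough (hS hX) (hS hY)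
  obtain ⟨t, ht⟩ := exists_sub_eq_smul_of_mem_lineThrough (hS hx) (hS hy)
  rw [hs, minkSq_smul] at hXY
  have hdir : 0 < minkSq (b - a) := pos_of_mul_pos_right hXY (sq_nonneg s)
  have ht0 : t ≠ 0 := by
    rintro rfl
    exact hxy (sub_eq_zero.mp (by rw [ht, zero_smul]))
  rw [ht, minkSq_smul]
  positivity

end Lines

namespace Frame

variable {B : Type*}

section Field

variable {Q : Type*} [Field Q] {F : Frame Q B}

theorem AxPh.exists_photon_iff (hPh : F.AxPh) {k : B} (hk : k ∈ F.IOb)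
    (x y : Fin 4 → Q) : (∃ p ∈ F.Ph, x ∈ F.wl k p ∧ y ∈ F.wl k p) ↔ minkSq (x - y) = 0 := by
  rw [hPh k hk x y, minkSq, sub_eq_zero, eq_comm]
  rfl

theorem AxSelf.sub_eq_smul_single (hSelf : F.AxSelf) {k : B} (hk : k ∈ F.IOb)
    {x y : Fin 4 → Q} (hx : x ∈ F.wl k k) (hy : y ∈ F.wl k k) :
    x - y = (x 0 - y 0) • Pi.single 0 1 := by
  obtain ⟨hx1, hx2, hx3⟩ := hSelf k hk x hx
  obtain ⟨hy1, hy2, hy3⟩ := hSelf k hk y hy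
  ext i
  fin_cases i <;> simp [*]

end Field

variable {Q : Type*} [Field Q] [LinearOrder Q] [IsStrictOrderedRing Q] {F : Frame Q B}

theorem AxPh.minkSq_apply_eq_zero (hPh : F.AxPh) (hW : F.AxW) {h k : B} (hh : h ∈ F.IOb)
    (hk : k ∈ F.IOb) {L : (Fin 4 → Q) →ₗ[Q] (Fin 4 → Q)} (hL : ∀ x, F.w h k x = L x + F.w h k 0)
    {v : Fin 4 → Q} (hv : minkSq v = 0) : minkSq (L v) = 0 := by
  obtain ⟨p, hp, hvp, h0p⟩ := (hPh.exists_photon_iff hh v 0).mpr (by rwa [sub_zero])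
  have himg := (hW h hh k hk).2.2 p
  have hphoton := (hPh.exists_photon_iff hk (F.w h k v) (F.w h k 0)).mp
    ⟨p, hp, himg ▸ Set.mem_image_of_mem _ hvp, himg ▸ Set.mem_image_of_mem _ h0p⟩
  rwa [hL v, add_sub_cancel_right] at hphoton

theorem finite_of_minkSq_sub_pos {k b : B}
    (htl : ∀ x ∈ F.wl k b, ∀ y ∈ F.wl k b, x ≠ y → 0 < minkSq (x - y)) : F.finite k b :=
  fun x hx y hy hxy h0 =>
    apply_zero_ne_zero_of_minkSq_pos (htl x hx y hy hxy) (by rw [Pi.sub_apply, h0, sub_self])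

theorem speed_lt_one_of_minkSq_sub_pos (hE : AxEField Q) {k b : B}
    (htl : ∀ x ∈ F.wl k b, ∀ y ∈ F.wl k b, x ≠ y → 0 < minkSq (x - y))
    (hne : ∃ x ∈ F.wl k b, ∃ y ∈ F.wl k b, x ≠ y) : F.speed k b < 1 := by
  have hex : ∃ x, x ∈ F.wl k b ∧ ∃ y, y ∈ F.wl k b ∧ x 0 ≠ y 0 := by
    obtain ⟨x, hx, y, hy, hxy⟩ := hne
    exact ⟨x, hx, y, hy, finite_of_minkSq_sub_pos htl x hx y hy hxy⟩
  rw [speed, vvec, dif_pos hex, enorm3]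
  set x := hex.choose
  set y := hex.choose_spec.2.choose
  have hxy0 : x 0 - y 0 ≠ 0 := sub_ne_zero.mpr hex.choose_spec.2.choose_spec.2
  have hxy : 0 < minkSq (x - y) := htl x hex.choose_spec.1 y hex.choose_spec.2.choose_spec.1
    fun h => hxy0 (by rw [h, sub_self])
  have hnorm : normSq3 (fun i : Fin 3 => (x i.succ - y i.succ) / (x 0 - y 0)) =
      ((x 1 - y 1) ^ 2 + (x 2 - y 2) ^ 2 + (x 3 - y 3) ^ 2) / (x 0 - y 0) ^ 2 := by
    simp only [normSq3, div_pow, ← add_div]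
    rfl
  rw [hnorm]
  simp only [minkSq, Pi.sub_apply, sub_pos] at hxy
  exact esqrt_lt_one hE (by positivity) ((div_lt_one (by positivity)).mpr hxy)

end Frame

/-- **Corollary (no FTL inertial observers).**  Assume `BA` and `AxPh`.
For all inertial observers `k`, `h`, the speed `v_k(h)` is finite and
`v_k(h) < 1`. -/
theorem no_ftl_observers
    {Q : Type*} [Field Q] [LinearOrder Q] [IsStrictOrderedRing Q] {B : Type*} (F : Frame Q B)
    (hBA : F.BA) (hPh : F.AxPh)
    (k h : B) (hk : k ∈ F.IOb) (hh : h ∈ F.IOb) :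
    F.finite k h ∧ F.speed k h < 1 := by
  obtain ⟨hE, hL, hW, hSelf⟩ := hBA
  obtain ⟨hbij, ⟨L, hwL⟩, himg⟩ := hW h hh k hk
  have hinj : Function.Injective L := fun u v huv => hbij.1 (by rw [hwL u, hwL v, huv])
  have htime : 0 < minkSq (L (Pi.single 0 1)) := minkSq_pos_apply_single_zero hE hinj
    fun v hv => hPh.minkSq_apply_eq_zero hW hh hk hwL hv
  obtain ⟨x, hx, y, hy, hxy⟩ := (hL h hh h (Or.inr hh)).2
  have hself := hSelf.sub_eq_smul_single hh hx hy
  have hxy0 : x 0 - y 0 ≠ 0 := fun h0 => hxy (sub_eq_zero.mp (by rw [hself, h0, zero_smul]))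
  have hXY : 0 < minkSq (F.w h k x - F.w h k y) := by
    rw [hwL x, hwL y, add_sub_add_right_eq_sub, ← map_sub, hself, map_smul, minkSq_smul]
    positivity
  have hmem : ∀ z ∈ F.wl h h, F.w h k z ∈ F.wl k h := fun z hz =>
    himg h ▸ Set.mem_image_of_mem _ hz
  obtain ⟨a, b, -, hline⟩ := (hL k hk h (Or.inr hh)).1
  have htl : ∀ u ∈ F.wl k h, ∀ v ∈ F.wl k h, u ≠ v → 0 < minkSq (u - v) :=
    fun u hu v hv huv => minkSq_sub_pos_of_subset_lineThrough hline (hmem x hx) (hmem y hy) hXY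
      hu hv huv
  exact ⟨Frame.finite_of_minkSq_sub_pos htl,
    Frame.speed_lt_one_of_minkSq_sub_pos hE htl (hL k hk h (Or.inr hh)).2⟩
end
end

section
/- Let F be a Euclidean field and let a, b, d, v ∈ F satisfy d ≠ 0, v > 0 and a + b·v ≠ 0. Define g : F → F by g(x) = |d|·(v − x) − |a + b·x|·x. Then there exists u ∈ F with 0 < u < v and g(u) = 0 (and for any such u, necessarily a + b·u ≠ 0). -/
/-!
Let `σ` be the sign of `a + b·v`. The quadratic `q(x) = |d|·(v − x) − σ·(a + b·x)·x` is
positive at `0` and negative at `v`; since square roots exist, its factorisation over `F` puts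
a root `u` in `(0, v)`. There `σ·(a + b·u)·u = |d|·(v − u) > 0`, so `|a + b·u| = σ·(a + b·u)`
and `u` is a root of `g`.
-/

open Set

section EuclideanField

variable {F : Type*} [Field F] [LinearOrder F] [IsStrictOrderedRing F]

lemma mem_Ioo_of_mul_sub_pos {l h x : F} (hlh : l ≤ h) (hx : 0 < (x - l) * (h - x)) :
    x ∈ Ioo l h := by
  rcases pos_and_pos_or_neg_and_neg_of_mul_pos hx with ⟨h₁, h₂⟩ | ⟨h₁, h₂⟩
  · exact ⟨by linarith, by linarith⟩
  · linarith

lemma exists_linear_eq_zero_mem_Ioo {b c l h : F} (hlh : l ≤ h)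
    (hsign : (b * l + c) * (b * h + c) < 0) : ∃ u ∈ Ioo l h, b * u + c = 0 := by
  have hb : b ≠ 0 := by
    rintro rfl
    nlinarith [mul_self_nonneg c]
  refine ⟨-c / b, mem_Ioo_of_mul_sub_pos hlh ?_, by field_simp; ring⟩
  have : (b * l + c) * (b * h + c) = -(b ^ 2 * ((-c / b - l) * (h - -c / b))) := by
    field_simp; ring
  nlinarith [sq_nonneg b]

lemma quadratic_eq_mul_sub_mul_sub {a b c s : F} (ha : a ≠ 0) (hs : discrim a b c = s * s)
    (x : F) :
    a * (x * x) + b * x + c = a * (x - (-b + s) / (2 * a)) * (x - (-b - s) / (2 * a)) := by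
  rw [discrim] at hs
  field_simp
  linear_combination -hs

lemma discrim_nonneg_of_mul_neg {a b c l h : F}
    (hsign : (a * (l * l) + b * l + c) * (a * (h * h) + b * h + c) < 0) :
    0 ≤ discrim a b c := by
  by_contra! hΔ
  have key : ∀ x, 4 * a * (a * (x * x) + b * x + c) = (2 * a * x + b) ^ 2 - discrim a b c :=
    fun x => by rw [discrim]; ring
  have hprod : (4 * a) ^ 2 * ((a * (l * l) + b * l + c) * (a * (h * h) + b * h + c)) =
      ((2 * a * l + b) ^ 2 - discrim a b c) * ((2 * a * h + b) ^ 2 - discrim a b c) := by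
    rw [← key, ← key]; ring
  have hnonpos := mul_nonpos_of_nonneg_of_nonpos (sq_nonneg (4 * a)) hsign.le
  have hl : 0 < (2 * a * l + b) ^ 2 - discrim a b c := by linarith [sq_nonneg (2 * a * l + b)]
  have hh : 0 < (2 * a * h + b) ^ 2 - discrim a b c := by linarith [sq_nonneg (2 * a * h + b)]
  linarith [mul_pos hl hh]

lemma exists_quadratic_eq_zero_mem_Ioo (hE : ∀ x : F, 0 ≤ x → ∃ y : F, y ^ 2 = x)
    {a b c l h : F} (hlh : l ≤ h)
    (hsign : (a * (l * l) + b * l + c) * (a * (h * h) + b * h + c) < 0) :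
    ∃ u ∈ Ioo l h, a * (u * u) + b * u + c = 0 := by
  rcases eq_or_ne a 0 with rfl | ha
  · simpa using exists_linear_eq_zero_mem_Ioo hlh (by simpa using hsign)
  obtain ⟨s, hs⟩ := hE _ (discrim_nonneg_of_mul_neg hsign)
  set α := (-b + s) / (2 * a)
  set β := (-b - s) / (2 * a)
  have hfactor := quadratic_eq_mul_sub_mul_sub ha (hs.symm.trans (sq s))
  have hprod : (a * (l * l) + b * l + c) * (a * (h * h) + b * h + c) =
      a ^ 2 * ((α - l) * (h - α)) * ((β - l) * (h - β)) := by
    rw [hfactor l, hfactor h]; ring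
  by_cases hα : 0 < (α - l) * (h - α)
  · exact ⟨α, mem_Ioo_of_mul_sub_pos hlh hα, by rw [hfactor]; ring⟩
  · refine ⟨β, mem_Ioo_of_mul_sub_pos hlh ?_, by rw [hfactor]; ring⟩
    by_contra! hβ
    have hαβ : 0 ≤ a ^ 2 * ((α - l) * (h - α)) * ((β - l) * (h - β)) :=
      mul_nonneg_of_nonpos_of_nonpos
        (mul_nonpos_of_nonneg_of_nonpos (sq_nonneg a) (not_lt.mp hα)) hβ
    linarith

lemma exists_abs_mul_eq_mul_sub_of_pos (hE : ∀ x : F, 0 ≤ x → ∃ y : F, y ^ 2 = x)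
    {a b D v : F} (hD : 0 < D) (hv : 0 < v) (habv : 0 < a + b * v) :
    ∃ u ∈ Ioo 0 v, |a + b * u| * u = D * (v - u) := by
  have hsign : (-b * (0 * 0) + -(D + a) * 0 + D * v) *
      (-b * (v * v) + -(D + a) * v + D * v) < 0 := by
    have : (-b * (0 * 0) + -(D + a) * 0 + D * v) * (-b * (v * v) + -(D + a) * v + D * v) =
        -((D * v) * ((a + b * v) * v)) := by ring
    rw [this, neg_lt_zero]
    positivity
  obtain ⟨u, ⟨hu0, huv⟩, hq⟩ := exists_quadratic_eq_zero_mem_Ioo hE hv.le hsign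
  have hu : (a + b * u) * u = D * (v - u) := by linear_combination -hq
  have hpos : 0 < a + b * u :=
    (pos_iff_pos_of_mul_pos (hu ▸ mul_pos hD (sub_pos.mpr huv))).mpr hu0
  exact ⟨u, ⟨hu0, huv⟩, by rw [abs_of_pos hpos, hu]⟩

lemma exists_abs_mul_eq_mul_sub (hE : ∀ x : F, 0 ≤ x → ∃ y : F, y ^ 2 = x)
    {a b D v : F} (hD : 0 < D) (hv : 0 < v) (habv : a + b * v ≠ 0) :
    ∃ u ∈ Ioo 0 v, |a + b * u| * u = D * (v - u) := by
  rcases habv.lt_or_gt with hneg | hpos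
  · obtain ⟨u, hu, h⟩ := exists_abs_mul_eq_mul_sub_of_pos hE hD hv (a := -a) (b := -b)
      (by linarith)
    refine ⟨u, hu, ?_⟩
    rwa [neg_mul, ← neg_add, abs_neg] at h
  · exact exists_abs_mul_eq_mul_sub_of_pos hE hD hv hpos

end EuclideanField

/-- Let `F` be a Euclidean field and `a, b, d, v ∈ F` with `d ≠ 0`, `v > 0`
and `a + b·v ≠ 0`.  Define `g(x) = |d|·(v − x) − |a + b·x|·x`.  Then `g` has
a root `u` with `0 < u < v`, and any such root satisfies `a + b·u ≠ 0`. -/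
theorem exists_root_of_speed_equation
    {F : Type*} [Field F] [LinearOrder F] [IsStrictOrderedRing F]
    (hE : ∀ x : F, 0 ≤ x → ∃ y : F, y ^ 2 = x)
    (a b d v : F) (hd : d ≠ 0) (hv : 0 < v) (habv : a + b * v ≠ 0)
    (g : F → F) (hg : ∀ x : F, g x = |d| * (v - x) - |a + b * x| * x) :
    (∃ u : F, 0 < u ∧ u < v ∧ g u = 0) ∧
      (∀ u : F, 0 < u → u < v → g u = 0 → a + b * u ≠ 0) := by
  have hD : 0 < |d| := abs_pos.mpr hd
  refine ⟨?_, fun u _ huv hgu hzero => ?_⟩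
  · obtain ⟨u, ⟨hu0, huv⟩, hu⟩ := exists_abs_mul_eq_mul_sub hE hD hv habv
    exact ⟨u, hu0, huv, by rw [hg, hu, sub_self]⟩
  · rw [hg, hzero, abs_zero, zero_mul, sub_zero] at hgu
    exact (mul_pos hD (sub_pos.mpr huv)).ne' hgu
end
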